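/- arXiv:1104.4152 — 3 statements merged into one kernel-verified Lean document; each statement's English description precedes it below -/
import Mathlib

section
/- If τ : M → N is a surjective weak map between matroids, then the induced map τ^# : L(M) → L(N) between lattices of flats, defined by τ^#(X) = cl_N(τ(X)), is surjective, and moreover for every flat Y of N there exists a flat X of M with τ^#(X) = Y and rank_M(X) = rank_N(Y). -/
open Finset

/-- A finite matroid on ground set `E`, presented by its rank function. -/
structure FinMatroid (E : Type) [DecidableEq E] [Fintype E] where
  rk : Finset E → ℕ
  rk_le_card : ∀ X, rk X ≤ X.card
  rk_mono : ∀ ⦃X Y : Finset E⦄, X ⊆ Y → rk X ≤ rk Y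
  rk_submod : ∀ X Y, rk (X ∪ Y) + rk (X ∩ Y) ≤ rk X + rk Y

namespace FinMatroid

variable {E α β γ : Type} [DecidableEq E] [Fintype E]

/-- A set is independent iff its rank equals its cardinality. -/
def Indep (M : FinMatroid E) (X : Finset E) : Prop := M.rk X = X.card

/-- The closure of a set: all elements whose insertion does not raise the rank. -/
def closure (M : FinMatroid E) (X : Finset E) : Finset E :=
  univ.filter fun e => M.rk (insert e X) = M.rk X

/-- A flat is a closed set. -/
def IsFlat (M : FinMatroid E) (X : Finset E) : Prop := M.closure X = X

instance (M : FinMatroid E) (X : Finset E) : Decidable (M.IsFlat X) :=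
  decidable_of_iff (M.closure X = X) Iff.rfl

/-- The rank of the matroid. -/
def rank (M : FinMatroid E) : ℕ := M.rk univ

/-- The image of a finite set under a map into `E(N) ∪ {o}`; the zero element `o`
is modelled by `none` and contributes nothing to the image. -/
def optImage [DecidableEq β] (τ : α → Option β) (X : Finset α) : Finset β :=
  X.biUnion fun a => (τ a).toFinset

variable [DecidableEq α] [Fintype α] [DecidableEq β] [Fintype β]

/-- `τ : E(M) ∪ o → E(N) ∪ o` (with `o ↦ o`) is a weak map iff the rank of the image of any
set is at most the rank of the set. -/
def IsWeakMap (M : FinMatroid α) (N : FinMatroid β) (τ : α → Option β) : Prop :=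
  ∀ X : Finset α, N.rk (optImage τ X) ≤ M.rk X

/-- `τ` is surjective if every (nonzero) element of `E(N)` is in the image. -/
def IsSurjMap (τ : α → Option β) : Prop := ∀ b : β, ∃ a : α, τ a = some b

/-- Preimage of `Y ∪ {o}` under `τ`, intersected with `E(M)`. -/
def optPreimage (τ : α → Option β) (Y : Finset β) : Finset α :=
  univ.filter fun a => ∀ b, τ a = some b → b ∈ Y

/-- A strong map: preimages of flats are flats. -/
def IsStrongMap (M : FinMatroid α) (N : FinMatroid β) (τ : α → Option β) : Prop :=
  ∀ Y : Finset β, N.IsFlat Y → M.IsFlat (optPreimage τ Y)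

/-- The induced map `τ^#` on flats, `X ↦ cl_N(τ(X))`. -/
def hmap (N : FinMatroid β) (τ : α → Option β) (X : Finset α) : Finset β :=
  N.closure (optImage τ X)

/-- The Möbius function `μ(0̂, X)` of the lattice of flats of `M`, where `0̂ = cl(∅)`. -/
def mu (M : FinMatroid E) (X : Finset E) : ℤ :=
  if X = M.closure ∅ then 1
  else - ∑ Y ∈ (X.powerset.filter fun Y => M.IsFlat Y ∧ Y ≠ X).attach, M.mu Y.1
termination_by X.card
decreasing_by
  have h := Y.2
  simp only [Finset.mem_filter, Finset.mem_powerset] at h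
  exact Finset.card_lt_card (h.1.ssubset_of_ne h.2.2)

/-- The `k`-th Whitney number of the first kind. -/
def whitney (M : FinMatroid E) (k : ℕ) : ℕ :=
  ∑ X ∈ univ.powerset.filter (fun X => M.IsFlat X ∧ M.rk X = k), (M.mu X).natAbs

end FinMatroid

namespace FinMatroid

variable {E : Type} [DecidableEq E] [Fintype E]

lemma mem_closure {M : FinMatroid E} {X : Finset E} {e : E} :
    e ∈ M.closure X ↔ M.rk (insert e X) = M.rk X := by
  simp [closure]

lemma subset_closure (M : FinMatroid E) (X : Finset E) : X ⊆ M.closure X := by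
  intro e he
  rw [mem_closure, Finset.insert_eq_self.mpr he]

lemma rk_union_of_subset_closure (M : FinMatroid E) {X A : Finset E}
    (h : A ⊆ M.closure X) : M.rk (X ∪ A) = M.rk X := by
  classical
  revert h
  induction A using Finset.induction with
  | empty => intro _; simp
  | @insert e A he ih =>
      intro hIns
      have hA : A ⊆ M.closure X := (Finset.subset_insert e A).trans hIns
      have hih := ih hA
      have hecl : M.rk (insert e X) = M.rk X :=
        mem_closure.mp (hIns (Finset.mem_insert_self e A))
      have hsub := M.rk_submod (X ∪ A) (insert e X)
      have h1 : (X ∪ A) ∪ insert e X = X ∪ insert e A := by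
        ext x; simp [Finset.mem_union, Finset.mem_insert]; tauto
      have h2 : X ⊆ (X ∪ A) ∩ insert e X := by
        intro x hx
        simp [Finset.mem_inter, Finset.mem_union, Finset.mem_insert, hx]
      have h3 : M.rk X ≤ M.rk ((X ∪ A) ∩ insert e X) := M.rk_mono h2
      have h4 : M.rk X ≤ M.rk (X ∪ insert e A) :=
        M.rk_mono (Finset.subset_union_left)
      rw [h1] at hsub
      omega

lemma rk_closure (M : FinMatroid E) (X : Finset E) : M.rk (M.closure X) = M.rk X := by
  have : X ∪ M.closure X = M.closure X :=
    Finset.union_eq_right.mpr (M.subset_closure X)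
  rw [← this, M.rk_union_of_subset_closure (Finset.Subset.refl _)]

lemma closure_isFlat (M : FinMatroid E) (X : Finset E) : M.IsFlat (M.closure X) := by
  apply Finset.Subset.antisymm
  · intro e he
    rw [mem_closure] at he ⊢
    rw [M.rk_closure] at he
    have h1 : M.rk (insert e X) ≤ M.rk (insert e (M.closure X)) :=
      M.rk_mono (Finset.insert_subset_insert _ (M.subset_closure X))
    have h2 : M.rk X ≤ M.rk (insert e X) := M.rk_mono (Finset.subset_insert _ _)
    omega
  · exact M.subset_closure _

lemma closure_mono (M : FinMatroid E) {X Y : Finset E} (h : X ⊆ Y) :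
    M.closure X ⊆ M.closure Y := by
  intro e he
  rw [mem_closure] at he ⊢
  have hsub := M.rk_submod (insert e X) Y
  have h1 : insert e X ∪ Y = insert e Y := by
    rw [Finset.insert_union, Finset.union_eq_right.mpr h]
  have h2 : X ⊆ insert e X ∩ Y := by
    intro x hx; simp [Finset.mem_inter, Finset.mem_insert, hx, h hx]
  have h3 : M.rk X ≤ M.rk (insert e X ∩ Y) := M.rk_mono h2
  have h4 : M.rk Y ≤ M.rk (insert e Y) := M.rk_mono (Finset.subset_insert _ _)
  rw [h1] at hsub
  omega

/-- Every set has a basis. -/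
lemma exists_basis (M : FinMatroid E) (Y : Finset E) :
    ∃ B ⊆ Y, M.rk B = B.card ∧ M.rk B = M.rk Y ∧ Y ⊆ M.closure B := by
  classical
  have hne : (Y.powerset.filter fun B => M.rk B = B.card).Nonempty := by
    refine ⟨∅, ?_⟩
    simp [Finset.mem_filter, Nat.le_zero.mp (by simpa using M.rk_le_card ∅)]
  obtain ⟨B, hBmem, hBmax⟩ := Finset.exists_max_image _ Finset.card hne
  simp only [Finset.mem_filter, Finset.mem_powerset] at hBmem
  obtain ⟨hBY, hBind⟩ := hBmem
  have hYcl : Y ⊆ M.closure B := by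
    intro e heY
    by_cases heB : e ∈ B
    · exact M.subset_closure B heB
    rw [mem_closure]
    have h1 : M.rk B ≤ M.rk (insert e B) := M.rk_mono (Finset.subset_insert _ _)
    rcases Nat.lt_or_ge (M.rk (insert e B)) (M.rk B + 1) with hlt | hge
    · omega
    · exfalso
      have hcard : (insert e B).card = B.card + 1 := Finset.card_insert_of_notMem heB
      have hle : M.rk (insert e B) ≤ B.card + 1 := by
        have := M.rk_le_card (insert e B); omega
      have hind : M.rk (insert e B) = (insert e B).card := by omega
      have := hBmax (insert e B) (by
        simp only [Finset.mem_filter, Finset.mem_powerset]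
        exact ⟨Finset.insert_subset heY hBY, hind⟩)
      omega
  refine ⟨B, hBY, hBind, ?_, hYcl⟩
  have h1 : M.rk B ≤ M.rk Y := M.rk_mono hBY
  have h2 : M.rk Y ≤ M.rk (M.closure B) := M.rk_mono hYcl
  rw [M.rk_closure] at h2
  omega

lemma optImage_mono {α β : Type} [DecidableEq β] (τ : α → Option β) {X Y : Finset α}
    (h : X ⊆ Y) : optImage τ X ⊆ optImage τ Y :=
  Finset.biUnion_subset_biUnion_of_subset_left _ h

end FinMatroid

/-- for a surjective weak map `τ : M → N`, the induced map
`τ^# : L(M) → L(N)`, `X ↦ cl_N(τ(X))`, is surjective onto the flats of `N`, and every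
flat `Y` of `N` has a preimage flat `X` of `M` with `rank_M(X) = rank_N(Y)`. -/
theorem stmt_1 {α β : Type} [DecidableEq α] [Fintype α] [DecidableEq β] [Fintype β]
    (M : FinMatroid α) (N : FinMatroid β) (τ : α → Option β)
    (hw : FinMatroid.IsWeakMap M N τ) (hs : FinMatroid.IsSurjMap τ) :
    ∀ Y : Finset β, N.IsFlat Y →
      ∃ X : Finset α, M.IsFlat X ∧ FinMatroid.hmap N τ X = Y ∧ M.rk X = N.rk Y := by
  intro Y hY
  obtain ⟨B, hBY, hBind, hBrk, hYcl⟩ := N.exists_basis Y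
  choose f hf using hs
  classical
  set S := B.image f with hS
  have himg : FinMatroid.optImage τ S = B := by
    ext x
    simp only [FinMatroid.optImage, Finset.mem_biUnion, hS, Finset.mem_image]
    constructor
    · rintro ⟨a, ⟨b, hb, rfl⟩, hx⟩
      rw [hf b] at hx
      simp only [Option.toFinset_some, Finset.mem_singleton] at hx
      subst hx; exact hb
    · intro hx
      exact ⟨f x, ⟨x, hx, rfl⟩, by simp [hf x]⟩
  have hScard : S.card ≤ B.card := Finset.card_image_le
  have h1 : N.rk B ≤ M.rk S := by have := hw S; rwa [himg] at this
  have h2 : M.rk S ≤ S.card := M.rk_le_card S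
  have hSrk : M.rk S = N.rk Y := by omega
  refine ⟨M.closure S, M.closure_isFlat S, ?_, by rw [M.rk_closure]; omega⟩
  set X := M.closure S with hX
  set T := FinMatroid.optImage τ X with hT
  have hBT : B ⊆ T := by
    rw [← himg]; exact FinMatroid.optImage_mono τ (M.subset_closure S)
  have hMX : M.rk X = M.rk S := M.rk_closure S
  have hTle : N.rk T ≤ M.rk X := hw X
  have hBleT : N.rk B ≤ N.rk T := N.rk_mono hBT
  have hTrk : N.rk T = N.rk B := by omega
  have hclBY : N.closure B = Y := by
    apply Finset.Subset.antisymm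
    · calc N.closure B ⊆ N.closure Y := N.closure_mono hBY
        _ = Y := hY
    · exact hYcl
  have hTsub : T ⊆ N.closure B := by
    intro e he
    rw [FinMatroid.mem_closure]
    have h3 : insert e B ⊆ T := Finset.insert_subset he hBT
    have h4 : N.rk (insert e B) ≤ N.rk T := N.rk_mono h3
    have h5 : N.rk B ≤ N.rk (insert e B) := N.rk_mono (Finset.subset_insert _ _)
    omega
  have : N.closure T = Y := by
    apply Finset.Subset.antisymm
    · calc N.closure T ⊆ N.closure (N.closure B) := N.closure_mono hTsub
        _ = N.closure B := N.closure_isFlat B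
        _ = Y := hclBY
    · rw [← hclBY]
      exact N.closure_mono hBT
  rw [FinMatroid.hmap, ← hT, this]
end

section
/- Every surjective weak map τ : M → N between matroids factors through the truncation: if k = rank(M) − rank(N), then τ equals the composition of the identity weak map M → T^k(M) with the induced weak map T^k(M) → N. -/
open Finset

/-- every surjective weak map `τ : M → N` factors through the truncation
`T^k(M)` with `k = rank M - rank N`: the identity is a weak map `M → T^k(M)`, the same
underlying set map `τ` is a weak map `T^k(M) → N`, and the composite of the two set maps
is `τ`. -/
theorem stmt_4 {α β : Type} [DecidableEq α] [Fintype α] [DecidableEq β] [Fintype β]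
    (M : FinMatroid α) (N : FinMatroid β) (τ : α → Option β)
    (hw : FinMatroid.IsWeakMap M N τ) (hs : FinMatroid.IsSurjMap τ)
    (k : ℕ) (hk : k = M.rank - N.rank)
    (T : FinMatroid α) (hT : ∀ X : Finset α, T.rk X = min (M.rk X) (M.rank - k)) :
    FinMatroid.IsWeakMap M T (fun a => some a) ∧
    FinMatroid.IsWeakMap T N τ ∧
    (∀ a : α, (some a).bind τ = τ a) := by
  have himg : ∀ X : Finset α, FinMatroid.optImage (fun a : α => some a) X = X := by
    intro X
    ext a
    simp [FinMatroid.optImage]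
  have hNM : N.rank ≤ M.rank := by
    have huniv : FinMatroid.optImage τ univ = univ := by
      ext b
      simp only [FinMatroid.optImage, mem_biUnion, mem_univ, true_iff, iff_true]
      obtain ⟨a, ha⟩ := hs b
      exact ⟨a, trivial, by simp [ha]⟩
    have := hw univ
    rw [huniv] at this
    exact this
  have hMk : M.rank - k = N.rank := by omega
  refine ⟨?_, ?_, fun a => rfl⟩
  · intro X
    rw [himg, hT]
    exact min_le_left _ _
  · intro X
    rw [hT, hMk, le_min_iff]
    exact ⟨hw X, N.rk_mono (subset_univ _)⟩
end

section
/- If L is a finite geometric lattice, then μ(0̂, p) ≠ 0 for every element p of L, where μ is the Möbius function of L. -/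
open Finset

open Finset in
open Classical in
/-- A finite lattice `L` with rank function `rk` is *geometric* if `rk` is the grading
(zero at the bottom, increasing by one along covers), semimodular, and every element
is the join of the atoms below it. -/
def IsGeometricLattice (L : Type) [Lattice L] [BoundedOrder L] [Fintype L] (rk : L → ℕ) : Prop :=
  rk ⊥ = 0 ∧ (∀ a b : L, a ⋖ b → rk b = rk a + 1) ∧
  (∀ a b : L, rk (a ⊓ b) + rk (a ⊔ b) ≤ rk a + rk b) ∧
  (∀ a : L, a = (univ.filter fun x => IsAtom x ∧ x ≤ a).sup id)

section RotaAux
open Finset IncidenceAlgebra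

variable {L : Type} [Lattice L] [BoundedOrder L] [Fintype L] [DecidableEq L]
  [LocallyFiniteOrder L]

lemma rota_rk_lt_of_lt (rk : L → ℕ) (hcov : ∀ a b : L, a ⋖ b → rk b = rk a + 1)
    {a b : L} (hab : a < b) : rk a < rk b := by
  induction b using WellFoundedLT.induction generalizing a with
  | _ b IH =>
    obtain ⟨c, hac, hcb⟩ := exists_le_covBy_of_lt hab
    rw [hcov c b hcb]
    rcases eq_or_lt_of_le hac with rfl | h
    · omega
    · exact Nat.lt_succ_of_lt (IH c hcb.lt h)

lemma rota_weisner {a p : L} (ha : IsAtom a) (hap : a ≤ p) :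
    ∑ x ∈ (Icc (⊥ : L) p).filter (fun x => x ⊔ a = p), mu ℤ (⊥ : L) x = 0 := by
  classical
  have hS : ∑ x ∈ Icc (⊥ : L) p, ∑ y ∈ Icc (⊥ : L) p,
      (if x ⊔ a ≤ y then mu ℤ (⊥ : L) x * mu ℤ y p else 0)
      = ∑ x ∈ (Icc (⊥ : L) p).filter (fun x => x ⊔ a = p), mu ℤ (⊥ : L) x := by
    have step : ∀ x ∈ Icc (⊥ : L) p, (∑ y ∈ Icc (⊥ : L) p,
        (if x ⊔ a ≤ y then mu ℤ (⊥ : L) x * mu ℤ y p else 0))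
        = (if x ⊔ a = p then mu ℤ (⊥ : L) x else 0) := by
      intro x hx
      rw [← sum_filter]
      have hfil : (Icc (⊥ : L) p).filter (fun y => x ⊔ a ≤ y) = Icc (x ⊔ a) p := by
        ext y; simp only [mem_filter, mem_Icc, bot_le, true_and]; tauto
      rw [hfil, ← mul_sum, sum_Icc_mu_left]
      split_ifs with h <;> simp
    rw [sum_congr rfl step, sum_filter]
  have hS0 : ∑ x ∈ Icc (⊥ : L) p, ∑ y ∈ Icc (⊥ : L) p,
      (if x ⊔ a ≤ y then mu ℤ (⊥ : L) x * mu ℤ y p else 0) = 0 := by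
    rw [Finset.sum_comm]
    refine Finset.sum_eq_zero fun y hy => ?_
    by_cases hay : a ≤ y
    · have hfil : (Icc (⊥ : L) p).filter (fun x => x ⊔ a ≤ y) = Icc (⊥ : L) y := by
        ext x
        simp only [mem_filter, mem_Icc, bot_le, true_and, sup_le_iff]
        simp only [mem_Icc, bot_le, true_and] at hy
        constructor
        · rintro ⟨-, h, -⟩; exact h
        · intro h; exact ⟨le_trans h hy, h, hay⟩
      have : ∑ x ∈ Icc (⊥ : L) p, (if x ⊔ a ≤ y then mu ℤ (⊥ : L) x * mu ℤ y p else 0)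
          = (∑ x ∈ Icc (⊥ : L) y, mu ℤ (⊥ : L) x) * mu ℤ y p := by
        rw [← sum_filter, hfil, sum_mul]
      rw [this, sum_Icc_mu_right]
      have : (⊥ : L) ≠ y := by
        rintro rfl; exact ha.1 (le_bot_iff.1 hay)
      rw [if_neg this, zero_mul]
    · refine Finset.sum_eq_zero fun x _ => ?_
      rw [if_neg (fun h => hay (le_trans le_sup_right h))]
  rw [← hS, hS0]


lemma rota_key (rk : L → ℕ) (hgeo : IsGeometricLattice L rk) :
    ∀ p : L, 0 < (-1 : ℤ) ^ (rk p) * mu ℤ (⊥ : L) p := by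
  classical
  obtain ⟨h0, hcov, hsub, hatoms⟩ := hgeo
  intro p
  induction p using WellFoundedLT.induction with
  | _ p IH =>
  rcases eq_or_ne p ⊥ with rfl | hp
  · simp [h0]
  -- there is an atom below p
  obtain ⟨a, ha, hap⟩ : ∃ a : L, IsAtom a ∧ a ≤ p := by
    by_contra h
    push_neg at h
    have hfe : (univ.filter fun x : L => IsAtom x ∧ x ≤ p) = ∅ := by
      refine filter_eq_empty_iff.2 fun x _ => ?_
      rintro ⟨hx1, hx2⟩; exact h x hx1 hx2
    have := hatoms p
    rw [hfe] at this
    simp at this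
    exact hp this
  have hrka : rk a = 1 := by rw [hcov ⊥ a ha.bot_covBy, h0]
  -- ranks of x with x ⊔ a = p, x ≠ p
  have hrkx : ∀ x : L, x ≤ p → x ⊔ a = p → x ≠ p → rk p = rk x + 1 := by
    intro x hxp hxa hxne
    have hax : ¬ a ≤ x := fun h => hxne (by rw [← hxa, sup_eq_left.2 h])
    have hinf : x ⊓ a = ⊥ := by
      rcases lt_or_eq_of_le (inf_le_right : x ⊓ a ≤ a) with h | h
      · exact ha.2 _ h
      · exact absurd (h ▸ inf_le_left) hax
    have hsm := hsub x a
    rw [hinf, h0, hxa, hrka] at hsm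
    have hlt : rk x < rk p := rota_rk_lt_of_lt rk hcov (lt_of_le_of_ne hxp hxne)
    omega
  -- there exists x < p with x ⊔ a = p
  obtain ⟨x, hx⟩ : ∃ x : L, x ≤ p ∧ x ⊔ a = p ∧ x ≠ p := by
    obtain ⟨x, hxmem, hxmax⟩ : ∃ x ∈ (univ.filter fun y : L => y ≤ p ∧ ¬ a ≤ y),
        ∀ x' ∈ (univ.filter fun y : L => y ≤ p ∧ ¬ a ≤ y), ¬ x < x' := by
      obtain ⟨x, hx⟩ := Finset.exists_maximal (s := univ.filter fun y : L => y ≤ p ∧ ¬ a ≤ y)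
        ⟨⊥, by simp only [mem_filter, mem_univ, true_and]; exact ⟨bot_le, fun h => ha.1 (le_bot_iff.1 h)⟩⟩
      exact ⟨x, hx.1, fun y hy hlt => lt_irrefl x (lt_of_lt_of_le hlt (hx.2 hy hlt.le))⟩
    simp only [mem_filter, mem_univ, true_and] at hxmem
    obtain ⟨hxp, hax⟩ := hxmem
    have hxltxa : x < x ⊔ a := lt_of_le_of_ne le_sup_left
      (fun h => hax (h ▸ le_sup_right))
    have hstep : ∀ b : L, IsAtom b → b ≤ p → b ≤ x ⊔ a := by
      intro b hb hbp
      by_cases hbx : b ≤ x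
      · exact le_trans hbx le_sup_left
      · have haxb : a ≤ x ⊔ b := by
          by_contra hc
          exact hxmax (x ⊔ b) (by simp [sup_le hxp hbp, hc])
            (lt_of_le_of_ne le_sup_left (fun h => hbx (h ▸ le_sup_right)))
        have hle : x ⊔ a ≤ x ⊔ b := sup_le le_sup_left haxb
        have hinfb : x ⊓ b = ⊥ := by
          rcases lt_or_eq_of_le (inf_le_right : x ⊓ b ≤ b) with h | h
          · exact hb.2 _ h
          · exact absurd (h ▸ inf_le_left) hbx
        have h1 := hsub x b
        rw [hinfb, h0, hcov ⊥ b hb.bot_covBy, h0] at h1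
        have h2 : rk x < rk (x ⊔ a) := rota_rk_lt_of_lt rk hcov hxltxa
        have heq : x ⊔ a = x ⊔ b := by
          rcases lt_or_eq_of_le hle with h | h
          · have := rota_rk_lt_of_lt rk hcov h; omega
          · exact h
        rw [heq]; exact le_sup_right
    have hple : p ≤ x ⊔ a := by
      conv_lhs => rw [hatoms p]
      refine Finset.sup_le fun b hb => ?_
      simp only [mem_filter, mem_univ, true_and] at hb
      exact hstep b hb.1 hb.2
    have hxa : x ⊔ a = p := le_antisymm (sup_le hxp hap) hple
    exact ⟨x, hxp, hxa, fun h => hax (h ▸ hap)⟩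
  -- Weisner rearranged
  set s := (Icc (⊥ : L) p).filter (fun y => y ⊔ a = p) with hs
  have hps : p ∈ s := by simp [hs, sup_eq_left.2 hap]
  have hmu : mu ℤ (⊥ : L) p = -∑ y ∈ s.erase p, mu ℤ (⊥ : L) y := by
    have := rota_weisner ha hap
    rw [← hs, ← Finset.add_sum_erase s _ hps] at this
    linarith
  have hne : (s.erase p).Nonempty :=
    ⟨x, Finset.mem_erase.2 ⟨hx.2.2, by simp [hs, hx.1, hx.2.1]⟩⟩
  have hT : 0 < ∑ y ∈ s.erase p, (-1 : ℤ) ^ (rk y) * mu ℤ (⊥ : L) y := by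
    refine Finset.sum_pos (fun y hy => ?_) hne
    rw [Finset.mem_erase, hs, mem_filter, mem_Icc] at hy
    exact IH y (lt_of_le_of_ne hy.2.1.2 hy.1)
  calc (0 : ℤ) < ∑ y ∈ s.erase p, (-1 : ℤ) ^ (rk y) * mu ℤ (⊥ : L) y := hT
    _ = (-1 : ℤ) ^ (rk p) * mu ℤ (⊥ : L) p := by
        rw [hmu, mul_neg, Finset.mul_sum, ← Finset.sum_neg_distrib]
        refine Finset.sum_congr rfl fun y hy => ?_
        rw [Finset.mem_erase, hs, mem_filter, mem_Icc] at hy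
        rw [hrkx y hy.2.1.2 hy.2.2 hy.1, pow_succ]
        ring

end RotaAux

/-- in a finite geometric lattice `L`, `μ(⊥, p) ≠ 0` for every `p ∈ L`. -/
theorem stmt_6 (L : Type) [Lattice L] [BoundedOrder L] [Fintype L] [DecidableEq L]
    [LocallyFiniteOrder L] (rk : L → ℕ) (hgeo : IsGeometricLattice L rk) :
    ∀ p : L, IncidenceAlgebra.mu ℤ (⊥ : L) p ≠ 0 := by
  intro p hmu0
  have := rota_key rk hgeo p
  rw [hmu0, mul_zero] at this
  exact lt_irrefl 0 this
end
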